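/- Let k be a field and τ ∈ k with τ ≠ 0 and τ² ≠ −1. Let L = ℤ², W the group generated by σ₁(a, b) = (−a, a + b) and σ₂(a, b) = (a + b, −b), W_J = {id, σ₂}, and for J-dominant λ (second coordinate ≥ 0) set m_{J,λ} = Σ_{μ ∈ W_J·λ} e^μ in the group algebra k[L]; for dominant λ (both coordinates ≥ 0) set m_λ = Σ_{μ ∈ W·λ} e^μ. Set e₁ = 1, e₂ = (1 + τ⁻²)⁻¹·(e^{(0,1)} + e^{(1,−1)}), e₃ = τ²·e^{(1,0)}. Let ⊏ be the strict Macdonald order on ℤ² defined from the cone Q⁺ = ℕ₀·(2,−1) + ℕ₀·(−1,2): λ ⊏ μ iff (μ₊ − λ₊ ∈ Q⁺ \ {0}) or (λ₊ = μ₊ and λ − μ ∈ Q⁺ \ {0}), where λ₊ is the unique dominant element of W·λ. Then for every dominant λ ∈ ℤ²: (a) m_λ·e₁ − m_{J, σ₁(σ₂(λ))} lies in span_k{m_{J,ν} : ν J-dominant, ν ⊏ σ₁(σ₂(λ))}; (b) m_λ·e₂ − (1 + τ⁻²)⁻¹·m_{J, σ₁(λ + (0,1))} lies in span_k{m_{J,ν}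 : ν J-dominant, ν ⊏ σ₁(λ + (0,1))}; (c) m_λ·e₃ − τ²·m_{J, λ + (1,0)} lies in span_k{m_{J,ν} : ν J-dominant, ν ⊏ λ + (1,0)}. In particular the leading coefficients 1, (1 + τ⁻²)⁻¹, and τ² are nonzero. -/

import Mathlib

/-- The simple reflection `σ₁(a, b) = (−a, a + b)`. -/
def sigma1 : ℤ × ℤ → ℤ × ℤ := fun p => (-p.1, p.1 + p.2)

/-- The simple reflection `σ₂(a, b) = (a + b, −b)`. -/
def sigma2 : ℤ × ℤ → ℤ × ℤ := fun p => (p.1 + p.2, -p.2)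

/-- The `W`-orbit of `λ` (as a finset; `W = {1, σ₁, σ₂, σ₁σ₂, σ₂σ₁, σ₁σ₂σ₁}`). -/
def Worbit (l : ℤ × ℤ) : Finset (ℤ × ℤ) :=
  {l, sigma1 l, sigma2 l, sigma1 (sigma2 l), sigma2 (sigma1 l), sigma1 (sigma2 (sigma1 l))}

/-- The basis element `e^λ` of the group algebra `k[ℤ²]`. -/
noncomputable def eMon (k : Type*) [Field k] (l : ℤ × ℤ) : AddMonoidAlgebra k (ℤ × ℤ) :=
  AddMonoidAlgebra.single l 1

/-- The `W_J`-symmetric monomial `m_{J,λ} = Σ_{μ ∈ W_J·λ} e^μ`, `W_J = {1, σ₂}`. -/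
noncomputable def mJmon (k : Type*) [Field k] (l : ℤ × ℤ) : AddMonoidAlgebra k (ℤ × ℤ) :=
  ∑ μ ∈ ({l, sigma2 l} : Finset (ℤ × ℤ)), AddMonoidAlgebra.single μ (1 : k)

/-- The `W`-symmetric monomial `m_λ = Σ_{μ ∈ W·λ} e^μ` (each orbit element once). -/
noncomputable def mWmon (k : Type*) [Field k] (l : ℤ × ℤ) : AddMonoidAlgebra k (ℤ × ℤ) :=
  ∑ μ ∈ Worbit l, AddMonoidAlgebra.single μ (1 : k)

/-- The cone `Q⁺ = ℕ₀·(2,−1) + ℕ₀·(−1,2)` spanned by the doubled simple roots. -/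
def QposA2 : Set (ℤ × ℤ) :=
  {v | ∃ m n : ℕ, v = (m : ℤ) • ((2, -1) : ℤ × ℤ) + (n : ℤ) • ((-1, 2) : ℤ × ℤ)}

/-- `lp` is the dominant representative of the `W`-orbit of `l`. -/
def IsDomRep (l lp : ℤ × ℤ) : Prop :=
  lp ∈ Worbit l ∧ 0 ≤ lp.1 ∧ 0 ≤ lp.2

/-- The strict Macdonald order on `ℤ²`. -/
def macLtA2 (l m : ℤ × ℤ) : Prop :=
  ∃ lp mp : ℤ × ℤ, IsDomRep l lp ∧ IsDomRep m mp ∧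
    (mp - lp ∈ QposA2 \ {0} ∨ (lp = mp ∧ l - m ∈ QposA2 \ {0}))

/-- The span of the `m_{J,ν}` with `ν` `J`-dominant and `ν ⊏ μ`. -/
noncomputable def lowerSpan (k : Type*) [Field k] (μ : ℤ × ℤ) :
    Submodule k (AddMonoidAlgebra k (ℤ × ℤ)) :=
  Submodule.span k
    {f : AddMonoidAlgebra k (ℤ × ℤ) |
      ∃ ν : ℤ × ℤ, 0 ≤ ν.2 ∧ macLtA2 ν μ ∧ f = mJmon k ν}

noncomputable def sgl (k : Type*) [Field k] (p : ℤ × ℤ) : AddMonoidAlgebra k (ℤ × ℤ) :=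
  AddMonoidAlgebra.single p 1

theorem sgl_def (k : Type*) [Field k] (p : ℤ × ℤ) :
    sgl k p = AddMonoidAlgebra.single p 1 := rfl

theorem eMon_eq (k : Type*) [Field k] (p : ℤ × ℤ) : eMon k p = sgl k p := rfl

theorem sgl_mul (k : Type*) [Field k] (p q : ℤ × ℤ) :
    sgl k p * sgl k q = sgl k (p + q) := by
  exact (AddMonoidAlgebra.single_mul_single (m₁ := p) (m₂ := q) (r₁ := (1:k)) (r₂ := 1)).trans
    (by rw [one_mul]; rfl)

noncomputable def prj (k : Type*) [Field k] (x y : ℤ) : AddMonoidAlgebra k (ℤ × ℤ) :=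
  sgl k (x, y) + sgl k (x + y, -y)

theorem mJ_eq (k : Type*) [Field k] (x y : ℤ) (hy : y ≠ 0) :
    mJmon k (x, y) = prj k x y := by
  rw [mJmon, prj, sgl_def, sgl_def]
  have hs : sigma2 (x, y) = (x + y, -y) := rfl
  rw [hs, Finset.sum_pair (by simp [Prod.ext_iff]; omega)]

theorem mJ_eq0 (k : Type*) [Field k] (x : ℤ) :
    mJmon k (x, 0) = sgl k (x, 0) := by
  rw [mJmon, sgl_def]
  have hs : sigma2 (x, 0) = (x, 0) := by simp [sigma2]
  rw [hs, show ({(x,0), (x,0)} : Finset (ℤ × ℤ)) = {(x,0)} from by simp, Finset.sum_singleton]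

theorem mW_pp (k : Type*) [Field k] (a b : ℤ) (ha : 0 < a) (hb : 0 < b) :
    mWmon k (a, b) = sgl k (a,b) + sgl k (-a,a+b) + sgl k (a+b,-b) + sgl k (-a-b,a) + sgl k (b,-a-b) + sgl k (-b,-a) := by
  have h : Worbit (a,b) = {(a,b), (-a,a+b), (a+b,-b), (-a-b,a), (b,-a-b), (-b,-a)} := by
    simp only [Worbit, sigma1, sigma2]
    norm_num
    ring_nf
  rw [mWmon, h]
  rw [Finset.sum_insert (by simp [Prod.ext_iff]; omega),
      Finset.sum_insert (by simp [Prod.ext_iff]; omega),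
      Finset.sum_insert (by simp [Prod.ext_iff]; omega),
      Finset.sum_insert (by simp [Prod.ext_iff]; omega),
      Finset.sum_pair (by simp [Prod.ext_iff]; omega)]
  simp only [← sgl_def]
  abel

theorem mW_p0 (k : Type*) [Field k] (a : ℤ) (ha : 0 < a) :
    mWmon k (a, 0) = sgl k (a,0) + sgl k (-a,a) + sgl k (0,-a) := by
  have h : Worbit (a,0) = {(a,0), (-a,a), (0,-a)} := by
    apply Finset.ext
    rintro ⟨u, v⟩
    simp only [Worbit, sigma1, sigma2, Finset.mem_insert, Finset.mem_singleton, Prod.mk.injEq] <;> omega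
  rw [mWmon, h]
  rw [Finset.sum_insert (by simp [Prod.ext_iff]; omega),
      Finset.sum_pair (by simp [Prod.ext_iff]; omega)]
  simp only [← sgl_def]
  abel

theorem mW_0p (k : Type*) [Field k] (b : ℤ) (hb : 0 < b) :
    mWmon k (0, b) = sgl k (0,b) + sgl k (b,-b) + sgl k (-b,0) := by
  have h : Worbit (0,b) = {(0,b), (b,-b), (-b,0)} := by
    apply Finset.ext
    rintro ⟨u, v⟩
    simp only [Worbit, sigma1, sigma2, Finset.mem_insert, Finset.mem_singleton, Prod.mk.injEq] <;> omega
  rw [mWmon, h]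
  rw [Finset.sum_insert (by simp [Prod.ext_iff]; omega),
      Finset.sum_pair (by simp [Prod.ext_iff]; omega)]
  simp only [← sgl_def]
  abel

theorem mW_00 (k : Type*) [Field k] :
    mWmon k (0, 0) = sgl k (0,0) := by
  have h : Worbit (0,0) = {(0,0)} := by
    apply Finset.ext
    rintro ⟨u, v⟩
    simp only [Worbit, sigma1, sigma2, Finset.mem_insert, Finset.mem_singleton, Prod.mk.injEq] <;> omega
  rw [mWmon, sgl_def, h, Finset.sum_singleton]

theorem memQD (x y m n : ℤ) (hm : 0 ≤ m) (hn : 0 ≤ n) (h1 : x = 2*m - n) (h2 : y = 2*n - m)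
    (h0 : m ≠ 0 ∨ n ≠ 0) : ((x, y) : ℤ × ℤ) ∈ QposA2 \ {0} := by
  constructor
  · exact ⟨m.toNat, n.toNat, by simp [Prod.ext_iff]; omega⟩
  · simp only [Set.mem_singleton_iff, Prod.ext_iff, Prod.mk.injEq]
    simp only [Prod.fst_zero, Prod.snd_zero]
    omega

theorem mJ_mem (k : Type*) [Field k] (ν μ : ℤ × ℤ) (h2 : 0 ≤ ν.2) (hlt : macLtA2 ν μ) :
    mJmon k ν ∈ lowerSpan k μ :=
  Submodule.subset_span ⟨ν, h2, hlt, rfl⟩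

theorem pr_mem (k : Type*) [Field k] (x y : ℤ) (μ : ℤ × ℤ) (h2 : 0 ≤ y)
    (hlt : macLtA2 (x, y) μ) : prj k x y ∈ lowerSpan k μ := by
  rcases eq_or_ne y 0 with rfl | hy
  · have h : prj k x 0 = mJmon k (x, 0) + mJmon k (x, 0) := by
      rw [mJ_eq0, prj]; norm_num [sgl_def]
    rw [h]
    exact add_mem (mJ_mem k _ μ h2 hlt) (mJ_mem k _ μ h2 hlt)
  · rw [← mJ_eq k x y hy]
    exact mJ_mem k _ μ h2 hlt

theorem macLt_mk {l m : ℤ × ℤ} (x1 y1 x2 y2 : ℤ) (hl : ((x1,y1) : ℤ×ℤ) ∈ Worbit l)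
    (hm : ((x2,y2) : ℤ×ℤ) ∈ Worbit m)
    (h1 : 0 ≤ x1) (h2 : 0 ≤ y1) (h3 : 0 ≤ x2) (h4 : 0 ≤ y2)
    (h : (((x2,y2) - (x1,y1) : ℤ×ℤ)) ∈ QposA2 \ {0} ∨
      (((x1,y1):ℤ×ℤ) = (x2,y2) ∧ l - m ∈ QposA2 \ {0})) :
    macLtA2 l m := ⟨(x1,y1),(x2,y2),⟨hl,h1,h2⟩,⟨hm,h3,h4⟩,h⟩

set_option maxHeartbeats 1000000 in
theorem A2_leading_terms
    (k : Type*) [Field k] (τ : k) (hτ : τ ≠ 0) (hτ2 : τ ^ 2 ≠ -1) :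
    (∀ l : ℤ × ℤ, 0 ≤ l.1 → 0 ≤ l.2 →
      (mWmon k l * 1 - mJmon k (sigma1 (sigma2 l)) ∈
        lowerSpan k (sigma1 (sigma2 l))) ∧
      (mWmon k l * ((1 + (τ ^ 2)⁻¹)⁻¹ • (eMon k (0, 1) + eMon k (1, -1))) -
          (1 + (τ ^ 2)⁻¹)⁻¹ • mJmon k (sigma1 (l + (0, 1))) ∈
        lowerSpan k (sigma1 (l + (0, 1)))) ∧
      (mWmon k l * (τ ^ 2 • eMon k (1, 0)) - τ ^ 2 • mJmon k (l + (1, 0)) ∈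
        lowerSpan k (l + (1, 0)))) ∧
    ((1 : k) ≠ 0 ∧ (1 + (τ ^ 2)⁻¹)⁻¹ ≠ 0 ∧ τ ^ 2 ≠ 0) := by
  have hτsq : (τ:k)^2 ≠ 0 := pow_ne_zero 2 hτ
  have hc : (1 + (τ ^ 2)⁻¹) ≠ 0 := by
    intro h
    apply hτ2
    have h2 : (1 + (τ ^ 2)⁻¹) * τ ^ 2 = 0 * τ ^ 2 := by rw [h]
    rw [add_mul, one_mul, inv_mul_cancel₀ hτsq, zero_mul] at h2
    linear_combination h2
  refine ⟨?_, one_ne_zero, inv_ne_zero hc, hτsq⟩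
  rintro ⟨a, b⟩ ha hb
  have ha' : 0 ≤ a := ha
  have hb' : 0 ≤ b := hb
  rcases ha'.lt_or_eq with ha1 | ha1
  · rcases hb'.lt_or_eq with hb1 | hb1
    · -- a > 0, b > 0
      refine ⟨?_, ?_, ?_⟩
      · have hμ : sigma1 (sigma2 ((a,b) : ℤ×ℤ)) = (-a-b, a) := by
          simp [sigma1, sigma2, Prod.ext_iff] <;> omega
        rw [hμ, mul_one]
        have key : mWmon k (a,b) - mJmon k (-a-b,a) = prj k a b + prj k (-a) (a+b) := by
          rw [mW_pp k a b ha1 hb1, mJ_eq k (-a-b) a (by omega)]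
          simp only [prj]
          ring_nf
        rw [key]
        have m1 : macLtA2 ((a,b) : ℤ×ℤ) (-a-b, a) :=
          macLt_mk a b a b (by simp [Worbit, sigma1, sigma2, Prod.ext_iff] <;> omega)
            (by simp [Worbit, sigma1, sigma2, Prod.ext_iff] <;> omega)
            (by omega) (by omega) (by omega) (by omega)
            (Or.inr ⟨rfl, by rw [Prod.mk_sub_mk]; exact memQD _ _ (a+b) b (by omega) (by omega) (by ring) (by ring) (by omega)⟩)
        have m2 : macLtA2 ((-a,a+b) : ℤ×ℤ) (-a-b, a) :=
          macLt_mk a b a b (by simp [Worbit, sigma1, sigma2, Prod.ext_iff] <;> omega)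
            (by simp [Worbit, sigma1, sigma2, Prod.ext_iff] <;> omega)
            (by omega) (by omega) (by omega) (by omega)
            (Or.inr ⟨rfl, by rw [Prod.mk_sub_mk]; exact memQD _ _ b b (by omega) (by omega) (by ring) (by ring) (by omega)⟩)
        exact add_mem (pr_mem k a b _ hb' m1) (pr_mem k (-a) (a+b) _ (by omega) m2)
      · have hμ : sigma1 (((a,b) : ℤ×ℤ) + (0, 1)) = (-a, a+b+1) := by
          simp [sigma1, Prod.ext_iff] <;> omega
        rw [hμ, mul_smul_comm, ← smul_sub]
        refine Submodule.smul_mem _ _ ?_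
        have key : mWmon k (a,b) * (eMon k (0,1) + eMon k (1,-1)) - mJmon k (-a, a+b+1) =
            prj k a (b+1) + prj k (a+1) (b-1) + prj k (1-a) (a+b-1) + prj k (-a-b) (a+1)
              + prj k (1-a-b) (a-1) := by
          rw [mW_pp k a b ha1 hb1, mJ_eq k (-a) (a+b+1) (by omega)]
          simp only [prj, eMon_eq, mul_add, add_mul, sgl_mul, Prod.mk_add_mk]
          ring_nf
        rw [key]
        have m1 : macLtA2 ((a,b+1) : ℤ×ℤ) (-a, a+b+1) :=
          macLt_mk a (b+1) a (b+1) (by simp [Worbit, sigma1, sigma2, Prod.ext_iff] <;> omega)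
            (by simp [Worbit, sigma1, sigma2, Prod.ext_iff] <;> omega)
            (by omega) (by omega) (by omega) (by omega)
            (Or.inr ⟨rfl, by rw [Prod.mk_sub_mk]; exact memQD _ _ a 0 (by omega) (by omega) (by ring) (by ring) (by omega)⟩)
        have m2 : macLtA2 ((a+1,b-1) : ℤ×ℤ) (-a, a+b+1) :=
          macLt_mk (a+1) (b-1) a (b+1) (by simp [Worbit, sigma1, sigma2, Prod.ext_iff] <;> omega)
            (by simp [Worbit, sigma1, sigma2, Prod.ext_iff] <;> omega)
            (by omega) (by omega) (by omega) (by omega)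
            (Or.inl (by rw [Prod.mk_sub_mk]; exact memQD _ _ 0 1 (by omega) (by omega) (by ring) (by ring) (by omega)))
        have m3 : macLtA2 ((1-a,a+b-1) : ℤ×ℤ) (-a, a+b+1) :=
          macLt_mk (a-1) b a (b+1) (by simp [Worbit, sigma1, sigma2, Prod.ext_iff] <;> omega)
            (by simp [Worbit, sigma1, sigma2, Prod.ext_iff] <;> omega)
            (by omega) (by omega) (by omega) (by omega)
            (Or.inl (by rw [Prod.mk_sub_mk]; exact memQD _ _ 1 1 (by omega) (by omega) (by ring) (by ring) (by omega)))
        have m4 : macLtA2 ((-a-b,a+1) : ℤ×ℤ) (-a, a+b+1) :=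
          macLt_mk (a+1) (b-1) a (b+1) (by simp [Worbit, sigma1, sigma2, Prod.ext_iff] <;> omega)
            (by simp [Worbit, sigma1, sigma2, Prod.ext_iff] <;> omega)
            (by omega) (by omega) (by omega) (by omega)
            (Or.inl (by rw [Prod.mk_sub_mk]; exact memQD _ _ 0 1 (by omega) (by omega) (by ring) (by ring) (by omega)))
        have m5 : macLtA2 ((1-a-b,a-1) : ℤ×ℤ) (-a, a+b+1) :=
          macLt_mk (a-1) b a (b+1) (by simp [Worbit, sigma1, sigma2, Prod.ext_iff] <;> omega)
            (by simp [Worbit, sigma1, sigma2, Prod.ext_iff] <;> omega)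
            (by omega) (by omega) (by omega) (by omega)
            (Or.inl (by rw [Prod.mk_sub_mk]; exact memQD _ _ 1 1 (by omega) (by omega) (by ring) (by ring) (by omega)))
        exact add_mem (add_mem (add_mem (add_mem
          (pr_mem k a (b+1) _ (by omega) m1) (pr_mem k (a+1) (b-1) _ (by omega) m2))
          (pr_mem k (1-a) (a+b-1) _ (by omega) m3)) (pr_mem k (-a-b) (a+1) _ (by omega) m4))
          (pr_mem k (1-a-b) (a-1) _ (by omega) m5)
      · have hμ : ((a,b) : ℤ×ℤ) + (1, 0) = (a+1, b) := by
          simp [Prod.ext_iff]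
        rw [hμ, mul_smul_comm, ← smul_sub]
        refine Submodule.smul_mem _ _ ?_
        have key : mWmon k (a,b) * eMon k (1,0) - mJmon k (a+1,b) =
            prj k (1-a) (a+b) + prj k (1-a-b) a := by
          rw [mW_pp k a b ha1 hb1, mJ_eq k (a+1) b (by omega)]
          simp only [prj, eMon_eq, mul_add, add_mul, sgl_mul, Prod.mk_add_mk]
          ring_nf
        rw [key]
        have m1 : macLtA2 ((1-a,a+b) : ℤ×ℤ) (a+1, b) :=
          macLt_mk (a-1) (b+1) (a+1) b (by simp [Worbit, sigma1, sigma2, Prod.ext_iff] <;> omega)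
            (by simp [Worbit, sigma1, sigma2, Prod.ext_iff] <;> omega)
            (by omega) (by omega) (by omega) (by omega)
            (Or.inl (by rw [Prod.mk_sub_mk]; exact memQD _ _ 1 0 (by omega) (by omega) (by ring) (by ring) (by omega)))
        have m2 : macLtA2 ((1-a-b,a) : ℤ×ℤ) (a+1, b) :=
          macLt_mk a (b-1) (a+1) b (by simp [Worbit, sigma1, sigma2, Prod.ext_iff] <;> omega)
            (by simp [Worbit, sigma1, sigma2, Prod.ext_iff] <;> omega)
            (by omega) (by omega) (by omega) (by omega)
            (Or.inl (by rw [Prod.mk_sub_mk]; exact memQD _ _ 1 1 (by omega) (by omega) (by ring) (by ring) (by omega)))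
        exact add_mem (pr_mem k (1-a) (a+b) _ (by omega) m1) (pr_mem k (1-a-b) a _ (by omega) m2)
    · -- a > 0, b = 0
      subst hb1
      refine ⟨?_, ?_, ?_⟩
      · have hμ : sigma1 (sigma2 ((a,0) : ℤ×ℤ)) = (-a, a) := by
          simp [sigma1, sigma2, Prod.ext_iff] <;> omega
        rw [hμ, mul_one]
        have key : mWmon k (a,0) - mJmon k (-a,a) = mJmon k (a,0) := by
          rw [mW_p0 k a ha1, mJ_eq k (-a) a (by omega), mJ_eq0 k a]
          simp only [prj]
          ring_nf
        rw [key]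
        have m1 : macLtA2 ((a,0) : ℤ×ℤ) (-a, a) :=
          macLt_mk a 0 a 0 (by simp [Worbit, sigma1, sigma2, Prod.ext_iff] <;> omega)
            (by simp [Worbit, sigma1, sigma2, Prod.ext_iff] <;> omega)
            (by omega) (by omega) (by omega) (by omega)
            (Or.inr ⟨rfl, by rw [Prod.mk_sub_mk]; exact memQD _ _ a 0 (by omega) (by omega) (by ring) (by ring) (by omega)⟩)
        exact mJ_mem k (a,0) _ le_rfl m1
      · have hμ : sigma1 (((a,0) : ℤ×ℤ) + (0, 1)) = (-a, a+1) := by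
          simp [sigma1, Prod.ext_iff] <;> omega
        rw [hμ, mul_smul_comm, ← smul_sub]
        refine Submodule.smul_mem _ _ ?_
        have key : mWmon k (a,0) * (eMon k (0,1) + eMon k (1,-1)) - mJmon k (-a, a+1) =
            prj k a 1 + prj k (1-a) (a-1) := by
          rw [mW_p0 k a ha1, mJ_eq k (-a) (a+1) (by omega)]
          simp only [prj, eMon_eq, mul_add, add_mul, sgl_mul, Prod.mk_add_mk]
          ring_nf
        rw [key]
        have m1 : macLtA2 ((a,1) : ℤ×ℤ) (-a, a+1) :=
          macLt_mk a 1 a 1 (by simp [Worbit, sigma1, sigma2, Prod.ext_iff] <;> omega)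
            (by simp [Worbit, sigma1, sigma2, Prod.ext_iff] <;> omega)
            (by omega) (by omega) (by omega) (by omega)
            (Or.inr ⟨rfl, by rw [Prod.mk_sub_mk]; exact memQD _ _ a 0 (by omega) (by omega) (by ring) (by ring) (by omega)⟩)
        have m2 : macLtA2 ((1-a,a-1) : ℤ×ℤ) (-a, a+1) :=
          macLt_mk (a-1) 0 a 1 (by simp [Worbit, sigma1, sigma2, Prod.ext_iff] <;> omega)
            (by simp [Worbit, sigma1, sigma2, Prod.ext_iff] <;> omega)
            (by omega) (by omega) (by omega) (by omega)
            (Or.inl (by rw [Prod.mk_sub_mk]; exact memQD _ _ 1 1 (by omega) (by omega) (by ring) (by ring) (by omega)))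
        exact add_mem (pr_mem k a 1 _ (by omega) m1) (pr_mem k (1-a) (a-1) _ (by omega) m2)
      · have hμ : ((a,0) : ℤ×ℤ) + (1, 0) = (a+1, 0) := by
          simp [Prod.ext_iff]
        rw [hμ, mul_smul_comm, ← smul_sub]
        refine Submodule.smul_mem _ _ ?_
        have key : mWmon k (a,0) * eMon k (1,0) - mJmon k (a+1,0) = prj k (1-a) a := by
          rw [mW_p0 k a ha1, mJ_eq0 k (a+1)]
          simp only [prj, eMon_eq, mul_add, add_mul, sgl_mul, Prod.mk_add_mk]
          ring_nf
        rw [key]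
        have m1 : macLtA2 ((1-a,a) : ℤ×ℤ) (a+1, 0) :=
          macLt_mk (a-1) 1 (a+1) 0 (by simp [Worbit, sigma1, sigma2, Prod.ext_iff] <;> omega)
            (by simp [Worbit, sigma1, sigma2, Prod.ext_iff] <;> omega)
            (by omega) (by omega) (by omega) (by omega)
            (Or.inl (by rw [Prod.mk_sub_mk]; exact memQD _ _ 1 0 (by omega) (by omega) (by ring) (by ring) (by omega)))
        exact pr_mem k (1-a) a _ (by omega) m1
  · subst ha1
    rcases hb'.lt_or_eq with hb1 | hb1
    · -- a = 0, b > 0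
      refine ⟨?_, ?_, ?_⟩
      · have hμ : sigma1 (sigma2 ((0,b) : ℤ×ℤ)) = (-b, 0) := by
          simp [sigma1, sigma2, Prod.ext_iff] <;> omega
        rw [hμ, mul_one]
        have key : mWmon k (0,b) - mJmon k (-b,0) = prj k 0 b := by
          rw [mW_0p k b hb1, mJ_eq0 k (-b)]
          simp only [prj]
          ring_nf
        rw [key]
        have m1 : macLtA2 ((0,b) : ℤ×ℤ) (-b, 0) :=
          macLt_mk 0 b 0 b (by simp [Worbit, sigma1, sigma2, Prod.ext_iff] <;> omega)
            (by simp [Worbit, sigma1, sigma2, Prod.ext_iff] <;> omega)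
            (by omega) (by omega) (by omega) (by omega)
            (Or.inr ⟨rfl, by rw [Prod.mk_sub_mk]; exact memQD _ _ b b (by omega) (by omega) (by ring) (by ring) (by omega)⟩)
        exact pr_mem k 0 b _ (by omega) m1
      · have hμ : sigma1 (((0,b) : ℤ×ℤ) + (0, 1)) = (0, b+1) := by
          simp [sigma1, Prod.ext_iff] <;> omega
        rw [hμ, mul_smul_comm, ← smul_sub]
        refine Submodule.smul_mem _ _ ?_
        have key : mWmon k (0,b) * (eMon k (0,1) + eMon k (1,-1)) - mJmon k (0, b+1) =
            prj k 1 (b-1) + prj k (-b) 1 := by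
          rw [mW_0p k b hb1, mJ_eq k 0 (b+1) (by omega)]
          simp only [prj, eMon_eq, mul_add, add_mul, sgl_mul, Prod.mk_add_mk]
          ring_nf
        rw [key]
        have m1 : macLtA2 ((1,b-1) : ℤ×ℤ) (0, b+1) :=
          macLt_mk 1 (b-1) 0 (b+1) (by simp [Worbit, sigma1, sigma2, Prod.ext_iff] <;> omega)
            (by simp [Worbit, sigma1, sigma2, Prod.ext_iff] <;> omega)
            (by omega) (by omega) (by omega) (by omega)
            (Or.inl (by rw [Prod.mk_sub_mk]; exact memQD _ _ 0 1 (by omega) (by omega) (by ring) (by ring) (by omega)))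
        have m2 : macLtA2 ((-b,1) : ℤ×ℤ) (0, b+1) :=
          macLt_mk 1 (b-1) 0 (b+1) (by simp [Worbit, sigma1, sigma2, Prod.ext_iff] <;> omega)
            (by simp [Worbit, sigma1, sigma2, Prod.ext_iff] <;> omega)
            (by omega) (by omega) (by omega) (by omega)
            (Or.inl (by rw [Prod.mk_sub_mk]; exact memQD _ _ 0 1 (by omega) (by omega) (by ring) (by ring) (by omega)))
        exact add_mem (pr_mem k 1 (b-1) _ (by omega) m1) (pr_mem k (-b) 1 _ (by omega) m2)
      · have hμ : ((0,b) : ℤ×ℤ) + (1, 0) = (1, b) := by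
          simp [Prod.ext_iff]
        rw [hμ, mul_smul_comm, ← smul_sub]
        refine Submodule.smul_mem _ _ ?_
        have key : mWmon k (0,b) * eMon k (1,0) - mJmon k (1,b) = mJmon k (1-b,0) := by
          rw [mW_0p k b hb1, mJ_eq k 1 b (by omega), mJ_eq0 k (1-b)]
          simp only [prj, eMon_eq, mul_add, add_mul, sgl_mul, Prod.mk_add_mk]
          ring_nf
        rw [key]
        have m1 : macLtA2 ((1-b,0) : ℤ×ℤ) (1, b) :=
          macLt_mk 0 (b-1) 1 b (by simp [Worbit, sigma1, sigma2, Prod.ext_iff] <;> omega)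
            (by simp [Worbit, sigma1, sigma2, Prod.ext_iff] <;> omega)
            (by omega) (by omega) (by omega) (by omega)
            (Or.inl (by rw [Prod.mk_sub_mk]; exact memQD _ _ 1 1 (by omega) (by omega) (by ring) (by ring) (by omega)))
        exact mJ_mem k (1-b,0) _ le_rfl m1
    · -- a = 0, b = 0
      subst hb1
      refine ⟨?_, ?_, ?_⟩
      · have hμ : sigma1 (sigma2 ((0,0) : ℤ×ℤ)) = (0, 0) := by
          simp [sigma1, sigma2, Prod.ext_iff]
        rw [hμ, mul_one]
        have key : mWmon k (0,0) - mJmon k (0,0) = 0 := by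
          rw [mW_00 k, mJ_eq0 k 0, sub_self]
        rw [key]
        exact zero_mem _
      · have hμ : sigma1 (((0,0) : ℤ×ℤ) + (0, 1)) = (0, 1) := by
          simp [sigma1, Prod.ext_iff]
        rw [hμ, mul_smul_comm, ← smul_sub]
        refine Submodule.smul_mem _ _ ?_
        have key : mWmon k (0,0) * (eMon k (0,1) + eMon k (1,-1)) - mJmon k (0, 1) = 0 := by
          rw [mW_00 k, mJ_eq k 0 1 (by omega)]
          simp only [prj, eMon_eq, mul_add, add_mul, sgl_mul, Prod.mk_add_mk]
          ring_nf
        rw [key]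
        exact zero_mem _
      · have hμ : ((0,0) : ℤ×ℤ) + (1, 0) = (1, 0) := by
          simp [Prod.ext_iff]
        rw [hμ, mul_smul_comm, ← smul_sub]
        refine Submodule.smul_mem _ _ ?_
        have key : mWmon k (0,0) * eMon k (1,0) - mJmon k (1,0) = 0 := by
          rw [mW_00 k, mJ_eq0 k 1]
          simp only [eMon_eq, sgl_mul, Prod.mk_add_mk]
          ring_nf
        rw [key]
        exact zero_mem _
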